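/- Let K_i ∈ ℝ^{(m_i+…+m_N)×n} and L_i ∈ ℝ^{n×(p_1+…+p_i)} (i = 1,…,N) be arbitrary gains. Then for every i ∈ {1,…,N} and every s ∈ ℂ not in the spectrum of 𝒜, the matrix 𝒦_i (sI − 𝒜)^{-1} ℒ_i ∈ ℂ^{(m_i+…+m_N)×(p_1+…+p_i)} is zero. (This is the identity P′_{i,i} = 0, the key step showing that the proposed controller satisfies the optimality conditions of the triangular H₂ problem.) -/

import Mathlib

open Matrix

namespace TriLQG

noncomputable section

variable {N : ℕ}

/-- Index type of an `(N+1)`-block partitioned coordinate space with block sizes `d`. -/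
abbrev Idx {N : ℕ} (d : Fin (N+1) → ℕ) : Type := Σ k : Fin (N+1), Fin (d k)

/-- Indices belonging to blocks `i, i+1, …, N`. -/
abbrev IdxGe {N : ℕ} (d : Fin (N+1) → ℕ) (i : Fin (N+1)) : Type := {x : Idx d // i ≤ x.1}

/-- Indices belonging to blocks `0, 1, …, i`. -/
abbrev IdxLe {N : ℕ} (d : Fin (N+1) → ℕ) (i : Fin (N+1)) : Type := {x : Idx d // x.1 ≤ i}

/-- The selector matrix `E^{↓i}` (columns of the identity for blocks `i,…,N`). -/
def padGe (d : Fin (N+1) → ℕ) (i : Fin (N+1)) : Matrix (Idx d) (IdxGe d i) ℝ :=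
  Matrix.of fun r c => if r = (c : Idx d) then 1 else 0

/-- The selector matrix `E^{↑i}` (columns of the identity for blocks `0,…,i`). -/
def padLe (d : Fin (N+1) → ℕ) (i : Fin (N+1)) : Matrix (Idx d) (IdxLe d i) ℝ :=
  Matrix.of fun r c => if r = (c : Idx d) then 1 else 0

/-- Complexification of a real matrix. -/
def mc {α β : Type*} (M : Matrix α β ℝ) : Matrix α β ℂ := M.map Complex.ofReal

/-- A real square matrix is Hurwitz if its (complex) spectrum lies in the open left half plane. -/
def IsHurwitz {t : Type*} [Fintype t] [DecidableEq t] (M : Matrix t t ℝ) : Prop :=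
  ∀ z ∈ spectrum ℂ (mc M), z.re < 0

open Classical in
/-- The (unique, symmetric, positive semidefinite) square root of a positive semidefinite
real matrix; junk value `0` if the matrix is not positive semidefinite. -/
def msqrt {t : Type*} [Fintype t] [DecidableEq t] (M : Matrix t t ℝ) : Matrix t t ℝ :=
  if h : M.PosSemidef then
    (h.1.eigenvectorUnitary : Matrix t t ℝ) *
      diagonal ((RCLike.ofReal : ℝ → ℝ) ∘ Real.sqrt ∘ h.1.eigenvalues) *
      (star h.1.eigenvectorUnitary : Matrix t t ℝ)
  else 0

/-- Full column rank. -/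
def FullColRank {α β : Type*} [Fintype β] {R : Type*} [CommRing R] (M : Matrix α β R) : Prop :=
  M.rank = Fintype.card β

/-- Full row rank. -/
def FullRowRank {α β : Type*} [Fintype α] [Fintype β] {R : Type*} [CommRing R]
    (M : Matrix α β R) : Prop :=
  M.rank = Fintype.card α

/-- `ARE_p(Ã,B̃,F̃,H̃)` together with its gain: `X` is a symmetric solution of the
control algebraic Riccati equation and `K` is the associated gain. -/
def AREp {n' m' q' : Type*} [Fintype n'] [Fintype m'] [Fintype q'] [DecidableEq m']
    (At : Matrix n' n' ℝ) (Bt : Matrix n' m' ℝ) (Ft : Matrix q' n' ℝ) (Ht : Matrix q' m' ℝ)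
    (X : Matrix n' n' ℝ) (K : Matrix m' n' ℝ) : Prop :=
  X.IsSymm ∧
  Atᵀ * X + X * At - (X * Bt + Ftᵀ * Ht) * (Htᵀ * Ht)⁻¹ * (X * Bt + Ftᵀ * Ht)ᵀ + Ftᵀ * Ft = 0 ∧
  K = -((Htᵀ * Ht)⁻¹ * (X * Bt + Ftᵀ * Ht)ᵀ)

/-- `ARE_d(Ã,C̃,W̃,Ṽ)` together with its gain. -/
def AREd {n' p' r' : Type*} [Fintype n'] [Fintype p'] [Fintype r'] [DecidableEq p']
    (At : Matrix n' n' ℝ) (Ct : Matrix p' n' ℝ) (Wt : Matrix n' r' ℝ) (Vt : Matrix p' r' ℝ)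
    (Y : Matrix n' n' ℝ) (L : Matrix n' p' ℝ) : Prop :=
  Y.IsSymm ∧
  At * Y + Y * Atᵀ - (Ct * Y + Vt * Wtᵀ)ᵀ * (Vt * Vtᵀ)⁻¹ * (Ct * Y + Vt * Wtᵀ) + Wt * Wtᵀ = 0 ∧
  L = -((Ct * Y + Vt * Wtᵀ)ᵀ * (Vt * Vtᵀ)⁻¹)

/-- Lower block triangular sparsity. -/
def IsLBT {N : ℕ} {d e : Fin (N+1) → ℕ} (M : Matrix (Idx d) (Idx e) ℝ) : Prop :=
  ∀ a : Idx d, ∀ b : Idx e, a.1 < b.1 → M a b = 0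

/-- The data of the `(N+1)`-player triangular plant. -/
structure Plant (N : ℕ) where
  nd : Fin (N+1) → ℕ
  md : Fin (N+1) → ℕ
  pd : Fin (N+1) → ℕ
  q : ℕ
  r : ℕ
  A : Matrix (Idx nd) (Idx nd) ℝ
  B : Matrix (Idx nd) (Idx md) ℝ
  C : Matrix (Idx pd) (Idx nd) ℝ
  F : Matrix (Fin q) (Idx nd) ℝ
  H : Matrix (Fin q) (Idx md) ℝ
  W : Matrix (Idx nd) (Fin r) ℝ
  V : Matrix (Idx pd) (Fin r) ℝ

variable (P : Plant N)

/-- family of controller gains `K_i ∈ ℝ^{(m_i+⋯+m_N)×n}` -/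
abbrev KGains (P : Plant N) : Type := (i : Fin (N+1)) → Matrix (IdxGe P.md i) (Idx P.nd) ℝ

/-- family of observer gains `L_i ∈ ℝ^{n×(p_1+⋯+p_i)}` -/
abbrev LGains (P : Plant N) : Type := (i : Fin (N+1)) → Matrix (Idx P.nd) (IdxLe P.pd i) ℝ

/-- family of symmetric matrices `X_i` (or `Y_i`) -/
abbrev SFam (P : Plant N) : Type := Fin (N+1) → Matrix (Idx P.nd) (Idx P.nd) ℝ

def Bdown (i : Fin (N+1)) : Matrix (Idx P.nd) (IdxGe P.md i) ℝ := P.B.submatrix id Subtype.val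
def Hdown (i : Fin (N+1)) : Matrix (Fin P.q) (IdxGe P.md i) ℝ := P.H.submatrix id Subtype.val
def Cup (i : Fin (N+1)) : Matrix (IdxLe P.pd i) (Idx P.nd) ℝ := P.C.submatrix Subtype.val id
def Vup (i : Fin (N+1)) : Matrix (IdxLe P.pd i) (Fin P.r) ℝ := P.V.submatrix Subtype.val id

/-- `Ψ_{↓i}^{↓i} = (H^{↓i})ᵀ H^{↓i}` -/
def Psidd (i : Fin (N+1)) : Matrix (IdxGe P.md i) (IdxGe P.md i) ℝ := (Hdown P i)ᵀ * Hdown P i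

/-- `Φ_{↑j}^{↑j} = V_{↑j} (V_{↑j})ᵀ` -/
def Phiuu (j : Fin (N+1)) : Matrix (IdxLe P.pd j) (IdxLe P.pd j) ℝ := Vup P j * (Vup P j)ᵀ

/-- The coupled Riccati system (2a)–(2d) of the paper. -/
def Coupled (X : SFam P) (K : KGains P) (Y : SFam P) (L : LGains P) : Prop :=
  AREp P.A (Bdown P 0) P.F (Hdown P 0) (X 0) (K 0) ∧
  (∀ t : Fin N,
    AREp (P.A + L t.castSucc * Cup P t.castSucc) (Bdown P t.succ)
      (-(Hdown P t.castSucc * K t.castSucc)) (Hdown P t.succ) (X t.succ) (K t.succ)) ∧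
  AREd P.A (Cup P (Fin.last N)) P.W (Vup P (Fin.last N)) (Y (Fin.last N)) (L (Fin.last N)) ∧
  (∀ t : Fin N,
    AREd (P.A + Bdown P t.succ * K t.succ) (Cup P t.castSucc)
      (-(L t.succ * Vup P t.succ)) (Vup P t.castSucc) (Y t.castSucc) (L t.castSucc))

/-- `A^{KL}_{k+1,k}` for `k = 0, 1, …, N+1` (`k = 0` gives `A+BK_1`,
`k = N+1` gives `A+L_N C`). -/
def AKL (K : KGains P) (L : LGains P) (k : Fin (N+2)) : Matrix (Idx P.nd) (Idx P.nd) ℝ :=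
  if hk : k.1 < N + 1 then
    (if k.1 = 0 then P.A + Bdown P 0 * K 0
     else
       have h1 : k.1 - 1 < N + 1 := by omega
       P.A + Bdown P ⟨k.1, hk⟩ * K ⟨k.1, hk⟩ +
         L ⟨k.1 - 1, h1⟩ * Cup P ⟨k.1 - 1, h1⟩)
  else P.A + L (Fin.last N) * Cup P (Fin.last N)

/-- index set of the `n(N+1)`-dimensional controller state space -/
abbrev CtrIx {N : ℕ} (nd : Fin (N+1) → ℕ) : Type := Fin (N+1) × Idx nd

/-- index set of the `n(N+2)`-dimensional closed-loop state space:
`N+1` controller blocks and one plant block -/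
abbrev BigIx {N : ℕ} (nd : Fin (N+1) → ℕ) : Type := CtrIx nd ⊕ Idx nd

/-- the incidence matrix `ζ` -/
def zetaN (nd : Fin (N+1) → ℕ) : Matrix (CtrIx nd) (CtrIx nd) ℝ :=
  Matrix.of fun x y => if y.1 ≤ x.1 ∧ x.2 = y.2 then 1 else 0

/-- block diagonal matrix -/
def blkDiagN {nd : Fin (N+1) → ℕ} (f : Fin (N+1) → Matrix (Idx nd) (Idx nd) ℝ) :
    Matrix (CtrIx nd) (CtrIx nd) ℝ :=
  Matrix.of fun x y => if x.1 = y.1 then f x.1 x.2 y.2 else 0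

/-- `A_K` of the optimal controller realization -/
def AK (K : KGains P) (L : LGains P) : Matrix (CtrIx P.nd) (CtrIx P.nd) ℝ :=
  blkDiagN (fun _ => P.A) + blkDiagN (fun k => L k * Cup P k) +
    zetaN P.nd * blkDiagN (fun k => Bdown P k * K k) * (zetaN P.nd)⁻¹

/-- `B_K` of the optimal controller realization -/
def BK (L : LGains P) : Matrix (CtrIx P.nd) (Idx P.pd) ℝ :=
  Matrix.of fun x c => -((L x.1 * (padLe P.pd x.1)ᵀ) x.2 c)

/-- `C_K` of the optimal controller realization -/
def CK (K : KGains P) : Matrix (Idx P.md) (CtrIx P.nd) ℝ :=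
  (Matrix.of fun rr (x : CtrIx P.nd) => (padGe P.md x.1 * K x.1) rr x.2) * (zetaN P.nd)⁻¹

/-- closed-loop `𝒜` -/
def Acal (K : KGains P) (L : LGains P) : Matrix (BigIx P.nd) (BigIx P.nd) ℝ :=
  Matrix.fromBlocks (AK P K L) (BK P L * P.C) (P.B * CK P K) P.A

/-- closed-loop `ℬ` -/
def Bcal : Matrix (BigIx P.nd) (Idx P.md) ℝ :=
  Matrix.of fun x j => Sum.elim (fun _ => (0:ℝ)) (fun a => P.B a j) x

/-- closed-loop `𝒲` -/
def Wcal (L : LGains P) : Matrix (BigIx P.nd) (Fin P.r) ℝ :=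
  Matrix.of fun x j => Sum.elim (fun y => (BK P L * P.V) y j) (fun a => P.W a j) x

/-- closed-loop `ℱ` -/
def Fcal (K : KGains P) : Matrix (Fin P.q) (BigIx P.nd) ℝ :=
  Matrix.of fun i x => Sum.elim (fun y => (P.H * CK P K) i y) (fun a => P.F i a) x

/-- closed-loop `𝒞` -/
def Ccal : Matrix (Idx P.pd) (BigIx P.nd) ℝ :=
  Matrix.of fun i x => Sum.elim (fun _ => (0:ℝ)) (fun a => P.C i a) x

/-- block index of a closed-loop index -/
def blkOf {nd : Fin (N+1) → ℕ} (x : BigIx nd) : Fin (N+2) :=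
  Sum.elim (fun y => y.1.castSucc) (fun _ => Fin.last (N+1)) x

/-- within-block state of a closed-loop index -/
def stOf {nd : Fin (N+1) → ℕ} (x : BigIx nd) : Idx nd :=
  Sum.elim Prod.snd id x

/-- the incidence matrix `ζ̄` of the `(N+2)`-fold block structure -/
def zetaBar (nd : Fin (N+1) → ℕ) : Matrix (BigIx nd) (BigIx nd) ℝ :=
  Matrix.of fun x y => if blkOf y ≤ blkOf x ∧ stOf x = stOf y then 1 else 0

/-- embedding of a within-block index into the closed-loop index set, at block `k` -/
def emb {nd : Fin (N+1) → ℕ} (k : Fin (N+2)) (a : Idx nd) : BigIx nd :=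
  if h : k.1 < N + 1 then Sum.inl (⟨⟨k.1, h⟩, a⟩ : CtrIx nd) else Sum.inr a

/-- `𝒦_i` of the paper (eq. (9)). -/
def Kcal (K : KGains P) (i : Fin (N+1)) : Matrix (IdxGe P.md i) (BigIx P.nd) ℝ :=
  (padGe P.md i)ᵀ *
    Matrix.of fun (rr : Idx P.md) (x : BigIx P.nd) =>
      Sum.elim
        (fun y : CtrIx P.nd =>
          if hl : y.1.1 < N then
            (if y.1 < i then (0:ℝ)
             else
               have h1 : y.1.1 + 1 < N + 1 := by omega
               (padGe P.md ⟨y.1.1 + 1, h1⟩ * K ⟨y.1.1 + 1, h1⟩ -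
                   padGe P.md y.1 * K y.1) rr y.2)
          else (-(padGe P.md (Fin.last N) * K (Fin.last N))) rr y.2)
        (fun a => (padGe P.md i * K i) rr a) x

/-- `ℒ_j` of the paper (eq. (10)). -/
def Lcal (L : LGains P) (j : Fin (N+1)) : Matrix (BigIx P.nd) (IdxLe P.pd j) ℝ :=
  Matrix.of fun x c =>
    Sum.elim
      (fun y : CtrIx P.nd =>
        if y.1 < j then (L y.1 * (padLe P.pd y.1)ᵀ * padLe P.pd j) y.2 c else (L j) y.2 c)
      (fun a => (L j) a c) x

/-- `J̃_i` of the paper (eq. (11)). -/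
def Jtil (nd : Fin (N+1) → ℕ) (i : Fin (N+1)) : Matrix (Idx nd) (BigIx nd) ℝ :=
  Matrix.of fun a x =>
    Sum.elim
      (fun y : CtrIx nd => if 0 < i.1 ∧ y.1.1 = i.1 - 1 ∧ a = y.2 then (1:ℝ) else 0)
      (fun b => if a = b then (-1:ℝ) else 0) x

/-- `Ĵ_j` of the paper (eq. (11)). -/
def Jhat (nd : Fin (N+1) → ℕ) (j : Fin (N+1)) : Matrix (BigIx nd) (Idx nd) ℝ :=
  Matrix.of fun x a =>
    Sum.elim
      (fun y : CtrIx nd => if j < y.1 ∧ y.2 = a then (1:ℝ) else 0)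
      (fun b => if b = a then (1:ℝ) else 0) x

/-- `Γ_i = −(Ψ_{↓i}^{↓i})^{1/2} 𝒦_i` for `i ≥ 1` (Lemma 2 of the paper). -/
def Gam (K : KGains P) (i : Fin (N+1)) : Matrix (IdxGe P.md i) (BigIx P.nd) ℝ :=
  -(msqrt (Psidd P i) * Kcal P K i)

/-- `Λ_j = −ℒ_j (Φ_{↑j}^{↑j})^{1/2}` for `j ≤ N` (Lemma 2 of the paper). -/
def Lam (L : LGains P) (j : Fin (N+1)) : Matrix (BigIx P.nd) (IdxLe P.pd j) ℝ :=
  -(Lcal P L j * msqrt (Phiuu P j))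

/-- the inner factor `U_1(s)` -/
def Uone (K : KGains P) (L : LGains P) (s : ℂ) : Matrix (Fin P.q) (IdxGe P.md 0) ℂ :=
  mc (P.F + Hdown P 0 * K 0) * (s • 1 - mc (AKL P K L 0))⁻¹ * mc (Bdown P 0) *
      (mc (msqrt (Psidd P 0)))⁻¹ +
    mc (Hdown P 0) * (mc (msqrt (Psidd P 0)))⁻¹

/-- the inner factor `U_{t+2}(s)` (paper indexing), mapping block level `t+1` to `t` -/
def Usucc (K : KGains P) (L : LGains P) (t : Fin N) (s : ℂ) :
    Matrix (IdxGe P.md t.castSucc) (IdxGe P.md t.succ) ℂ :=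
  mc (msqrt (Psidd P t.castSucc)) *
      mc ((padGe P.md t.castSucc)ᵀ *
        (padGe P.md t.succ * K t.succ - padGe P.md t.castSucc * K t.castSucc)) *
      (s • 1 - mc (AKL P K L t.succ.castSucc))⁻¹ * mc (Bdown P t.succ) *
      (mc (msqrt (Psidd P t.succ)))⁻¹ +
    mc (msqrt (Psidd P t.castSucc)) * mc ((padGe P.md t.castSucc)ᵀ * padGe P.md t.succ) *
      (mc (msqrt (Psidd P t.succ)))⁻¹

/-- the co-inner factor `V_{N+1}(s)` (paper indexing: the last one) -/
def Vlast (K : KGains P) (L : LGains P) (s : ℂ) :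
    Matrix (IdxLe P.pd (Fin.last N)) (Fin P.r) ℂ :=
  (mc (msqrt (Phiuu P (Fin.last N))))⁻¹ * mc (Cup P (Fin.last N)) *
      (s • 1 - mc (AKL P K L (Fin.last (N+1))))⁻¹ *
      mc (P.W + L (Fin.last N) * Vup P (Fin.last N)) +
    (mc (msqrt (Phiuu P (Fin.last N))))⁻¹ * mc (Vup P (Fin.last N))

/-- the co-inner factor `V_{t+1}(s)` (paper indexing), for `t+1 ≤ N` -/
def Vmid (K : KGains P) (L : LGains P) (t : Fin N) (s : ℂ) :
    Matrix (IdxLe P.pd t.castSucc) (IdxLe P.pd t.succ) ℂ :=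
  (mc (msqrt (Phiuu P t.castSucc)))⁻¹ * mc (Cup P t.castSucc) *
      (s • 1 - mc (AKL P K L t.succ.castSucc))⁻¹ *
      mc ((L t.castSucc * (padLe P.pd t.castSucc)ᵀ - L t.succ * (padLe P.pd t.succ)ᵀ) *
        padLe P.pd t.succ * msqrt (Phiuu P t.succ)) +
    (mc (msqrt (Phiuu P t.castSucc)))⁻¹ *
      mc ((padLe P.pd t.castSucc)ᵀ * padLe P.pd t.succ * msqrt (Phiuu P t.succ))

/-- the product `U_1(s) U_2(s) ⋯ U_i(s)` -/
def Uprod (K : KGains P) (L : LGains P) (s : ℂ) :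
    (i : Fin (N+1)) → Matrix (Fin P.q) (IdxGe P.md i) ℂ :=
  Fin.induction (motive := fun i => Matrix (Fin P.q) (IdxGe P.md i) ℂ)
    (Uone P K L s) (fun t ih => ih * Usucc P K L t s)

/-- the product `V_j(s) V_{j+1}(s) ⋯ V_{N+1}(s)` -/
def Vprod (K : KGains P) (L : LGains P) (s : ℂ) :
    (j : Fin (N+1)) → Matrix (IdxLe P.pd j) (Fin P.r) ℂ :=
  Fin.reverseInduction (motive := fun j => Matrix (IdxLe P.pd j) (Fin P.r) ℂ)
    (Vlast P K L s) (fun t ih => Vmid P K L t s * ih)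

/-- closed-loop transfer function `G11(s) = ℱ(sI−𝒜)⁻¹𝒲` -/
def G11 (K : KGains P) (L : LGains P) (s : ℂ) : Matrix (Fin P.q) (Fin P.r) ℂ :=
  mc (Fcal P K) * (s • 1 - mc (Acal P K L))⁻¹ * mc (Wcal P L)

/-- closed-loop transfer function `G12(s) = ℱ(sI−𝒜)⁻¹ℬ + H` -/
def G12 (K : KGains P) (L : LGains P) (s : ℂ) : Matrix (Fin P.q) (Idx P.md) ℂ :=
  mc (Fcal P K) * (s • 1 - mc (Acal P K L))⁻¹ * mc (Bcal P) + mc P.H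

/-- closed-loop transfer function `G21(s) = 𝒞(sI−𝒜)⁻¹𝒲 + V` -/
def G21 (K : KGains P) (L : LGains P) (s : ℂ) : Matrix (Idx P.pd) (Fin P.r) ℂ :=
  mc (Ccal P) * (s • 1 - mc (Acal P K L))⁻¹ * mc (Wcal P L) + mc P.V

end

end TriLQG

/-!
Conjugate by the incidence matrix `ζ̄` of the `N+2` blocks. For `l ≤ c` the `(c, l)` block of
`𝒜 ζ̄` is `A + B^{↓l} K_l`, independent of `c`, so `μ̄ 𝒜 ζ̄` (with `μ̄ = ζ̄⁻¹`) is block upper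
triangular; moreover `𝒦_i ζ̄` vanishes on the blocks `≤ i` and `μ̄ ℒ_i` on the blocks `> i`.
Since `𝒦_i (sI - 𝒜)⁻¹ ℒ_i = (𝒦_i ζ̄) (sI - μ̄ 𝒜 ζ̄)⁻¹ (μ̄ ℒ_i)` and the inverse of a block upper
triangular matrix is again block upper triangular, every term of this product vanishes.
-/

namespace TriLQG

open Matrix

section Conjugation

variable {ι α R m p : Type*} [Fintype ι] [DecidableEq ι] [LinearOrder α] [CommRing R]

theorem mul_inv_mul_eq_zero_of_blockTriangular {b : ι → α} {i : α} {U Z S : Matrix ι ι R}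
    {K : Matrix m ι R} {L : Matrix ι p R} (hUZ : U * Z = 1) (hS : IsUnit S)
    (hT : BlockTriangular (U * S * Z) b)
    (hK : ∀ r x, b x ≤ i → (K * Z) r x = 0) (hL : ∀ y c, i < b y → (U * L) y c = 0) :
    K * S⁻¹ * L = 0 := by
  have hZU : Z * U = 1 := mul_eq_one_comm.mp hUZ
  have := invertibleOfLeftInverse Z U hUZ
  have := invertibleOfRightInverse U Z hUZ
  have := hS.invertible
  have := invertibleMul U S
  have := invertibleMul (U * S) Z
  have hTinv := blockTriangular_inv_of_blockTriangular hT
  have hconj : K * S⁻¹ * L = (K * Z) * (U * S * Z)⁻¹ * (U * L) := by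
    rw [Matrix.mul_inv_rev, Matrix.mul_inv_rev, inv_eq_left_inv hUZ, inv_eq_right_inv hUZ]
    calc K * S⁻¹ * L = K * (Z * U) * S⁻¹ * (Z * U) * L := by
          rw [hZU, Matrix.mul_one, Matrix.mul_one]
      _ = _ := by simp only [Matrix.mul_assoc]
  ext r c
  rw [hconj, mul_apply, Matrix.zero_apply]
  refine Finset.sum_eq_zero fun y _ => ?_
  rcases le_or_gt (b y) i with hy | hy
  · rw [mul_apply, Finset.sum_eq_zero, zero_mul]
    intro x _
    rcases le_or_gt (b x) i with hx | hx
    · rw [hK r x hx, zero_mul]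
    · rw [hTinv (hy.trans_lt hx), mul_zero]
  · rw [hL y c hy, mul_zero]

end Conjugation

section Incidence

variable {N : ℕ} (nd : Fin (N+1) → ℕ)

def shiftN : Matrix (CtrIx nd) (CtrIx nd) ℝ :=
  of fun x y => if x.1.1 = y.1.1 + 1 ∧ x.2 = y.2 then 1 else 0

def muN : Matrix (CtrIx nd) (CtrIx nd) ℝ := 1 - shiftN nd

def onesRow : Matrix (Idx nd) (CtrIx nd) ℝ := of fun a y => if a = y.2 then 1 else 0

def lastRow : Matrix (Idx nd) (CtrIx nd) ℝ :=
  of fun a y => if y.1 = Fin.last N ∧ a = y.2 then 1 else 0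

def muBar : Matrix (BigIx nd) (BigIx nd) ℝ := fromBlocks (muN nd) 0 (-lastRow nd) 1

variable {nd} {γ : Type*}

lemma shiftN_mul_apply_zero (X : Matrix (CtrIx nd) γ ℝ) (a : Idx nd) (y : γ) :
    (shiftN nd * X) (0, a) y = 0 := by
  simp [shiftN, mul_apply]

lemma shiftN_mul_apply_succ (X : Matrix (CtrIx nd) γ ℝ) (k : Fin N) (a : Idx nd) (y : γ) :
    (shiftN nd * X) (k.succ, a) y = X (k.castSucc, a) y := by
  rw [mul_apply, Fintype.sum_eq_single (k.castSucc, a)]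
  · simp [shiftN]
  · rintro ⟨j, e⟩ h
    simp only [shiftN, of_apply, Fin.val_succ] at h ⊢
    rw [if_neg, zero_mul]
    rintro ⟨hj, rfl⟩
    exact h (Prod.ext (Fin.ext (by simp only [Fin.val_castSucc]; omega)) rfl)

lemma mul_shiftN_apply_last (X : Matrix γ (CtrIx nd) ℝ) (r : γ) (b : Idx nd) :
    (X * shiftN nd) r (Fin.last N, b) = 0 := by
  refine Finset.sum_eq_zero fun ⟨j, e⟩ _ => ?_
  simp only [shiftN, of_apply, Fin.val_last]
  rw [if_neg (by omega), mul_zero]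

lemma mul_shiftN_apply_castSucc (X : Matrix γ (CtrIx nd) ℝ) (k : Fin N) (r : γ) (b : Idx nd) :
    (X * shiftN nd) r (k.castSucc, b) = X r (k.succ, b) := by
  rw [mul_apply, Fintype.sum_eq_single (k.succ, b)]
  · simp [shiftN]
  · rintro ⟨j, e⟩ h
    simp only [shiftN, of_apply, Fin.val_castSucc] at h ⊢
    rw [if_neg, mul_zero]
    rintro ⟨hj, rfl⟩
    exact h (Prod.ext (Fin.ext (by simp only [Fin.val_succ]; omega)) rfl)

lemma muN_mul_apply_zero (X : Matrix (CtrIx nd) γ ℝ) (a : Idx nd) (y : γ) :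
    (muN nd * X) (0, a) y = X (0, a) y := by
  rw [muN, Matrix.sub_mul, Matrix.one_mul, Matrix.sub_apply, shiftN_mul_apply_zero, sub_zero]

lemma muN_mul_apply_succ (X : Matrix (CtrIx nd) γ ℝ) (k : Fin N) (a : Idx nd) (y : γ) :
    (muN nd * X) (k.succ, a) y = X (k.succ, a) y - X (k.castSucc, a) y := by
  rw [muN, Matrix.sub_mul, Matrix.one_mul, Matrix.sub_apply, shiftN_mul_apply_succ]

lemma mul_muN_apply_last (X : Matrix γ (CtrIx nd) ℝ) (r : γ) (b : Idx nd) :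
    (X * muN nd) r (Fin.last N, b) = X r (Fin.last N, b) := by
  rw [muN, Matrix.mul_sub, Matrix.mul_one, Matrix.sub_apply, mul_shiftN_apply_last, sub_zero]

lemma mul_muN_apply_castSucc (X : Matrix γ (CtrIx nd) ℝ) (k : Fin N) (r : γ) (b : Idx nd) :
    (X * muN nd) r (k.castSucc, b) = X r (k.castSucc, b) - X r (k.succ, b) := by
  rw [muN, Matrix.mul_sub, Matrix.mul_one, Matrix.sub_apply, mul_shiftN_apply_castSucc]

variable (nd)

lemma muN_mul_zetaN : muN nd * zetaN nd = 1 := by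
  ext ⟨c, a⟩ ⟨l, b⟩
  induction c using Fin.cases with
  | zero => simp [muN_mul_apply_zero, zetaN, one_apply, eq_comm]
  | succ k =>
    rw [muN_mul_apply_succ]
    by_cases hab : a = b
    · simp only [zetaN, of_apply, one_apply, Prod.ext_iff, hab, and_true, Fin.le_def,
        Fin.ext_iff, Fin.val_succ, Fin.val_castSucc]
      split_ifs <;> first | omega | norm_num
    · simp [zetaN, one_apply, hab]

lemma inv_zetaN : (zetaN nd)⁻¹ = muN nd := inv_eq_left_inv (muN_mul_zetaN nd)

lemma lastRow_mul_apply (X : Matrix (CtrIx nd) γ ℝ) (a : Idx nd) (y : γ) :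
    (lastRow nd * X) a y = X (Fin.last N, a) y := by
  rw [mul_apply, Fintype.sum_eq_single (Fin.last N, a)]
  · simp [lastRow]
  · rintro ⟨j, e⟩ h
    simp only [lastRow, of_apply]
    rw [if_neg, zero_mul]
    rintro ⟨rfl, rfl⟩
    exact h rfl

lemma mul_onesRow_apply (X : Matrix γ (Idx nd) ℝ) (r : γ) (l : Fin (N+1)) (b : Idx nd) :
    (X * onesRow nd) r (l, b) = X r b := by
  simp [onesRow, mul_apply]

lemma lastRow_mul_zetaN : lastRow nd * zetaN nd = onesRow nd := by
  ext a ⟨l, b⟩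
  simp [lastRow_mul_apply, zetaN, onesRow, Fin.le_last]

lemma zetaBar_eq_fromBlocks : zetaBar nd = fromBlocks (zetaN nd) 0 (onesRow nd) 1 := by
  ext (⟨c, a⟩ | a) (⟨l, b⟩ | b) <;>
    simp [zetaBar, blkOf, stOf, zetaN, onesRow, one_apply, Fin.le_last]

lemma muBar_mul_zetaBar : muBar nd * zetaBar nd = 1 := by
  rw [muBar, zetaBar_eq_fromBlocks, fromBlocks_multiply]
  simp [muN_mul_zetaN, Matrix.neg_mul, lastRow_mul_zetaN]

lemma blkDiagN_mul_zetaN_apply (f : Fin (N+1) → Matrix (Idx nd) (Idx nd) ℝ)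
    (c l : Fin (N+1)) (a b : Idx nd) :
    (blkDiagN f * zetaN nd) (c, a) (l, b) = if l ≤ c then f c a b else 0 := by
  rw [mul_apply, Fintype.sum_eq_single (c, b)]
  · simp [blkDiagN, zetaN]
  · rintro ⟨j, e⟩ h
    simp only [blkDiagN, zetaN, of_apply]
    split_ifs with h1 h2 <;> simp_all

lemma zetaN_mul_blkDiagN_apply (f : Fin (N+1) → Matrix (Idx nd) (Idx nd) ℝ)
    (c l : Fin (N+1)) (a b : Idx nd) :
    (zetaN nd * blkDiagN f) (c, a) (l, b) = if l ≤ c then f l a b else 0 := by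
  rw [mul_apply, Fintype.sum_eq_single (l, a)]
  · simp [blkDiagN, zetaN]
  · rintro ⟨j, e⟩ h
    simp only [blkDiagN, zetaN, of_apply]
    split_ifs with h1 h2 <;> simp_all

end Incidence

section Selectors

variable {N : ℕ} {d : Fin (N+1) → ℕ} {γ : Type*}

lemma mul_padGe (M : Matrix γ (Idx d) ℝ) (i : Fin (N+1)) :
    M * padGe d i = M.submatrix id Subtype.val := by
  ext r c
  simp [mul_apply, padGe]

lemma padLe_transpose_mul (M : Matrix (Idx d) γ ℝ) (i : Fin (N+1)) :
    (padLe d i)ᵀ * M = M.submatrix Subtype.val id := by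
  ext r c
  simp [mul_apply, padLe]

end Selectors

section ClosedLoop

variable {N : ℕ} (P : Plant N) (K : KGains P) (L : LGains P)

lemma BK_mul_C_apply (c : Fin (N+1)) (a b : Idx P.nd) :
    (BK P L * P.C) (c, a) b = -(L c * Cup P c) a b := by
  rw [Cup, ← padLe_transpose_mul, ← Matrix.mul_assoc, mul_apply, mul_apply,
    ← Finset.sum_neg_distrib]
  simp [BK]

lemma B_mul_CK_mul_zetaN_apply (a : Idx P.nd) (l : Fin (N+1)) (b : Idx P.nd) :
    (P.B * CK P K * zetaN P.nd) a (l, b) = (Bdown P l * K l) a b := by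
  rw [CK, inv_zetaN, Matrix.mul_assoc, Matrix.mul_assoc, muN_mul_zetaN, Matrix.mul_one,
    Bdown, ← mul_padGe, Matrix.mul_assoc, mul_apply, mul_apply]
  rfl

lemma AK_mul_zetaN_apply (c l : Fin (N+1)) (a b : Idx P.nd) :
    (AK P K L * zetaN P.nd) (c, a) (l, b)
      = if l ≤ c then (P.A + L c * Cup P c + Bdown P l * K l) a b else 0 := by
  rw [AK, inv_zetaN, Matrix.add_mul, Matrix.add_mul, Matrix.mul_assoc _ (muN P.nd),
    muN_mul_zetaN, Matrix.mul_one]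
  simp only [Matrix.add_apply, blkDiagN_mul_zetaN_apply, zetaN_mul_blkDiagN_apply]
  split_ifs <;> simp

lemma AK_mul_zetaN_add_apply_of_le {c l : Fin (N+1)} (hl : l ≤ c) (a b : Idx P.nd) :
    (AK P K L * zetaN P.nd + BK P L * P.C * onesRow P.nd) (c, a) (l, b)
      = (P.A + Bdown P l * K l) a b := by
  rw [Matrix.add_apply, AK_mul_zetaN_apply, if_pos hl, mul_onesRow_apply, BK_mul_C_apply]
  simp only [Matrix.add_apply]
  ring

lemma B_mul_CK_mul_zetaN_add_eq_lastRow_mul :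
    P.B * CK P K * zetaN P.nd + P.A * onesRow P.nd
      = lastRow P.nd * (AK P K L * zetaN P.nd + BK P L * P.C * onesRow P.nd) := by
  ext a ⟨l, b⟩
  rw [lastRow_mul_apply, AK_mul_zetaN_add_apply_of_le P K L (Fin.le_last l), Matrix.add_apply,
    B_mul_CK_mul_zetaN_apply, mul_onesRow_apply, Matrix.add_apply, add_comm]

lemma blockTriangular_fromBlocks_blkOf {R : Type*} [Zero R] {nd : Fin (N+1) → ℕ}
    {A : Matrix (CtrIx nd) (CtrIx nd) R} (hA : BlockTriangular A Prod.fst)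
    (B : Matrix (CtrIx nd) (Idx nd) R) (D : Matrix (Idx nd) (Idx nd) R) :
    BlockTriangular (fromBlocks A B 0 D) blkOf := by
  rintro (x | a) (y | b) h <;> simp only [blkOf, Sum.elim_inl, Sum.elim_inr] at h
  · exact hA (Fin.castSucc_lt_castSucc_iff.mp h)
  · exact absurd h (not_lt.mpr (Fin.le_last _))
  · rfl
  · exact absurd h (lt_irrefl _)

theorem blockTriangular_muBar_mul_Acal_mul_zetaBar :
    BlockTriangular (muBar P.nd * Acal P K L * zetaBar P.nd) blkOf := by
  rw [Matrix.mul_assoc, muBar, Acal, zetaBar_eq_fromBlocks, fromBlocks_multiply,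
    fromBlocks_multiply]
  simp only [Matrix.mul_zero, Matrix.zero_mul, Matrix.mul_one, Matrix.one_mul, add_zero,
    zero_add, B_mul_CK_mul_zetaN_add_eq_lastRow_mul P K L, Matrix.neg_mul, neg_add_cancel]
  refine blockTriangular_fromBlocks_blkOf ?_ _ _
  rintro ⟨c, a⟩ ⟨l, b⟩ (hlc : l < c)
  obtain ⟨k, rfl⟩ := Fin.exists_succ_eq.mpr (Fin.pos_iff_ne_zero.mp (l.zero_le.trans_lt hlc))
  rw [muN_mul_apply_succ, AK_mul_zetaN_add_apply_of_le P K L hlc.le,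
    AK_mul_zetaN_add_apply_of_le P K L (Fin.le_castSucc_iff.mpr hlc), sub_self]

end ClosedLoop

section Gains

variable {N : ℕ} (P : Plant N) (K : KGains P) (L : LGains P)

-- With `P_k = E^{↓k} K_k`, block `k` of the controller columns of `𝒦_i` is `P_{k+1} - P_k` for
-- `i ≤ k < N`, `0` for `k < i` and `-P_N` for `k = N`: the column differences of `-P_{max k i}`.
lemma Kcal_eq_mul_fromCols (i : Fin (N+1)) :
    Kcal P K i = (padGe P.md i)ᵀ * fromCols
      ((of fun rr (y : CtrIx P.nd) => -(padGe P.md (max y.1 i) * K (max y.1 i)) rr y.2) *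
        muN P.nd) (padGe P.md i * K i) := by
  rw [Kcal]
  congr 1
  ext rr (⟨k, b⟩ | b)
  · induction k using Fin.lastCases with
    | last =>
      simp only [fromCols_apply_inl, mul_muN_apply_last, of_apply]
      rw [max_eq_left (Fin.le_last i)]
      simp
    | cast j =>
      rw [fromCols_apply_inl, mul_muN_apply_castSucc]
      simp only [of_apply, Sum.elim_inl, Fin.val_castSucc, j.isLt, dite_true]
      split_ifs with hj
      · rw [max_eq_right hj.le, max_eq_right (Fin.castSucc_lt_iff_succ_le.mp hj), sub_self]
      · have hij : i ≤ j.castSucc := not_lt.mp hj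
        rw [max_eq_left hij, max_eq_left (hij.trans Fin.castSucc_lt_succ.le),
          Matrix.sub_apply]
        change (padGe P.md j.succ * K j.succ) rr b - _ = _
        ring
  · rfl

lemma Kcal_mul_zetaBar_eq_zero (i : Fin (N+1)) (r : IdxGe P.md i) (x : BigIx P.nd)
    (hx : blkOf x ≤ i.castSucc) : (Kcal P K i * zetaBar P.nd) r x = 0 := by
  rcases x with ⟨l, b⟩ | b
  · have hl : l ≤ i := Fin.castSucc_le_castSucc_iff.mp hx
    rw [Kcal_eq_mul_fromCols, zetaBar_eq_fromBlocks, Matrix.mul_assoc, fromCols_mul_fromBlocks,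
      Matrix.mul_assoc, muN_mul_zetaN, Matrix.mul_one, mul_apply]
    refine Finset.sum_eq_zero fun rr _ => ?_
    rw [fromCols_apply_inl, Matrix.add_apply, mul_onesRow_apply, of_apply, max_eq_right hl,
      neg_add_cancel, mul_zero]
  · exact absurd hx (not_le.mpr (Fin.castSucc_lt_last i))

lemma muBar_mul_Lcal_eq_zero (i : Fin (N+1)) (y : BigIx P.nd) (c : IdxLe P.pd i)
    (hy : i.castSucc < blkOf y) : (muBar P.nd * Lcal P L i) y c = 0 := by
  rw [← fromRows_toRows (Lcal P L i), muBar, fromBlocks_mul_fromRows]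
  rcases y with ⟨c', a⟩ | a
  · have hic : i < c' := Fin.castSucc_lt_castSucc_iff.mp hy
    obtain ⟨k, rfl⟩ := Fin.exists_succ_eq.mpr (Fin.pos_iff_ne_zero.mp (i.zero_le.trans_lt hic))
    have hik : i ≤ k.castSucc := Fin.le_castSucc_iff.mpr hic
    simp [muN_mul_apply_succ, toRows₁, Lcal, not_lt.mpr hik, not_lt.mpr hic.le]
  · simp [Matrix.neg_mul, lastRow_mul_apply, toRows₁, toRows₂, Lcal,
      not_lt.mpr (Fin.le_last i)]

end Gains

lemma mc_mul {α β γ : Type*} [Fintype β] (A : Matrix α β ℝ) (B : Matrix β γ ℝ) :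
    mc (A * B) = mc A * mc B :=
  Matrix.map_mul (f := Complex.ofRealHom)

lemma mc_one {α : Type*} [Fintype α] [DecidableEq α] : mc (1 : Matrix α α ℝ) = 1 :=
  Matrix.map_one _ Complex.ofReal_zero Complex.ofReal_one

theorem stmt10_general {N : ℕ} (P : Plant N)
    (K : KGains P) (L : LGains P) (i : Fin (N+1))
    (s : ℂ) (hs : s ∉ spectrum ℂ (mc (Acal P K L))) :
    mc (Kcal P K i) * (s • 1 - mc (Acal P K L))⁻¹ * mc (Lcal P L i) = 0 := by
  have hUZ : mc (muBar P.nd) * mc (zetaBar P.nd) = 1 := by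
    rw [← mc_mul, muBar_mul_zetaBar, mc_one]
  refine mul_inv_mul_eq_zero_of_blockTriangular (b := blkOf) (i := i.castSucc) hUZ
    (by simpa [spectrum.mem_iff, Algebra.algebraMap_eq_smul_one] using hs) ?_ ?_ ?_
  · rw [Matrix.mul_sub, Matrix.sub_mul, Matrix.mul_smul, Matrix.mul_one, Matrix.smul_mul, hUZ,
      ← mc_mul, ← mc_mul, smul_one_eq_diagonal]
    exact (blockTriangular_diagonal _).sub
      ((blockTriangular_muBar_mul_Acal_mul_zetaBar P K L).map Complex.ofRealHom)
  · intro r x hx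
    rw [← mc_mul, mc, map_apply, Kcal_mul_zetaBar_eq_zero P K i r x hx, Complex.ofReal_zero]
  · intro y c hy
    rw [← mc_mul, mc, map_apply, muBar_mul_Lcal_eq_zero P L i y c hy, Complex.ofReal_zero]

/-- for arbitrary gains, `𝒦_i (sI − 𝒜)⁻¹ ℒ_i = 0` (the identity
`P′_{i,i} = 0`). -/
theorem stmt10 {N : ℕ} (P : Plant N)
    (hdim : ∀ k : Fin (N+1), 0 < P.nd k ∧ 0 < P.md k ∧ 0 < P.pd k)
    (K : KGains P) (L : LGains P) (i : Fin (N+1))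
    (s : ℂ) (hs : s ∉ spectrum ℂ (mc (Acal P K L))) :
    mc (Kcal P K i) * (s • 1 - mc (Acal P K L))⁻¹ * mc (Lcal P L i) = 0 :=
  stmt10_general P K L i s hs

end TriLQG
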